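/- For all real p > 0 and real q, ∫_{-∞}^{∞} exp(-p²t²) · erf(t) · erf(q t) dt = (2/(√π · p)) · arctan( q / (p · √(1 + p² + q²)) ). -/

import Mathlib

/-!
Expanding `erf (q t) = (2/√π) ∫₀^q t exp(-v² t²) dv` and exchanging the order of
integration reduces the integral to `∫₀^q (2/√π) I(p² + v²) dv`, where
`I(a) = ∫ t exp(-a t²) erf t dt`. Integration by parts gives `I(a) = 1 / (a √(a + 1))`,
because `exp(-a t²) erf' t` is a rescaled `erf'` at `√(a + 1) t`; and `(2/√π) I(p² + v²)`
is the `v`-derivative of the right-hand side.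
-/

open Real MeasureTheory

noncomputable def erf (x : ℝ) : ℝ := 2 / Real.sqrt π * ∫ s in (0:ℝ)..x, Real.exp (-s^2)

open Filter Topology Set

lemma hasDerivAt_erf (x : ℝ) : HasDerivAt erf (2 / √π * exp (-x ^ 2)) x := by
  have hc : Continuous fun s : ℝ => exp (-s ^ 2) := by fun_prop
  exact (intervalIntegral.integral_hasDerivAt_right (hc.intervalIntegrable 0 x)
    (hc.stronglyMeasurableAtFilter _ _) hc.continuousAt).const_mul _

@[fun_prop]
lemma continuous_erf : Continuous erf :=
  continuous_iff_continuousAt.2 fun x => (hasDerivAt_erf x).continuousAt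

lemma erf_neg (x : ℝ) : erf (-x) = -erf x := by
  have h := intervalIntegral.integral_comp_neg (a := 0) (b := x) fun s : ℝ => exp (-s ^ 2)
  simp only [even_two, Even.neg_pow, neg_zero] at h
  rw [erf, erf, intervalIntegral.integral_symm, ← h, mul_neg]

lemma abs_erf_le (x : ℝ) : |erf x| ≤ 2 / √π * |x| := by
  have h : ‖∫ s in (0:ℝ)..x, exp (-s ^ 2)‖ ≤ 1 * |x - 0| :=
    intervalIntegral.norm_integral_le_of_norm_le_const fun s _ => by
      rw [norm_of_nonneg (exp_pos _).le, exp_le_one_iff]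
      exact neg_nonpos.2 (sq_nonneg s)
  rw [erf, abs_mul, abs_of_nonneg (by positivity)]
  exact mul_le_mul_of_nonneg_left (by simpa using h) (by positivity)

lemma tendsto_erf_atTop : Tendsto erf atTop (𝓝 1) := by
  have hint : IntegrableOn (fun s : ℝ => exp (-s ^ 2)) (Ioi 0) := by
    simpa using (integrable_exp_neg_mul_sq one_pos).integrableOn
  have hval : ∫ s in Ioi (0:ℝ), exp (-s ^ 2) = √π / 2 := by
    simpa using integral_gaussian_Ioi 1
  have h := (intervalIntegral_tendsto_integral_Ioi 0 hint tendsto_id).const_mul (2 / √π)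
  rw [hval, div_mul_div_comm, mul_comm 2, div_self (by positivity)] at h
  exact h

lemma tendsto_erf_atBot : Tendsto erf atBot (𝓝 (-1)) := by
  have h := (tendsto_erf_atTop.comp tendsto_neg_atBot_atTop).neg
  simpa [Function.comp_def, erf_neg] using h

lemma tendsto_exp_neg_mul_sq_cocompact {a : ℝ} (ha : 0 < a) :
    Tendsto (fun t : ℝ => exp (-a * t ^ 2)) (cocompact ℝ) (𝓝 0) := by
  have h := ((tendsto_pow_atTop two_ne_zero).comp
    (tendsto_norm_cocompact_atTop (E := ℝ))).const_mul_atTop ha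
  refine tendsto_exp_atBot.comp (tendsto_neg_atTop_atBot.comp h) |>.congr fun t => ?_
  simp [norm_eq_abs, sq_abs]

lemma norm_mul_exp_neg_mul_sq_mul_erf_le {a b : ℝ} (hba : b ≤ a) (t : ℝ) :
    ‖t * exp (-a * t ^ 2) * erf t‖ ≤ 2 / √π * (t ^ 2 * exp (-b * t ^ 2)) := by
  have hexp : exp (-a * t ^ 2) ≤ exp (-b * t ^ 2) := by gcongr
  calc ‖t * exp (-a * t ^ 2) * erf t‖ = |t| * exp (-a * t ^ 2) * |erf t| := by
        rw [norm_mul, norm_mul, norm_of_nonneg (exp_pos _).le, norm_eq_abs, norm_eq_abs]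
    _ ≤ |t| * exp (-b * t ^ 2) * (2 / √π * |t|) := by gcongr; exact abs_erf_le t
    _ = 2 / √π * (t ^ 2 * exp (-b * t ^ 2)) := by rw [← sq_abs t]; ring

lemma integrable_sq_mul_exp_neg_mul_sq {b : ℝ} (hb : 0 < b) :
    Integrable fun t : ℝ => t ^ 2 * exp (-b * t ^ 2) := by
  simpa only [rpow_two] using integrable_rpow_mul_exp_neg_mul_sq hb (s := 2) (by norm_num)

lemma integrable_mul_exp_neg_mul_sq_mul_erf {a : ℝ} (ha : 0 < a) :
    Integrable fun t : ℝ => t * exp (-a * t ^ 2) * erf t :=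
  ((integrable_sq_mul_exp_neg_mul_sq ha).const_mul _).mono'
    (by fun_prop : Continuous _).aestronglyMeasurable
    (.of_forall (norm_mul_exp_neg_mul_sq_mul_erf_le le_rfl))

lemma hasDerivAt_erf_primitive {a : ℝ} (ha : 0 < a) (t : ℝ) :
    HasDerivAt
      (fun t => erf (√(a + 1) * t) / (2 * a * √(a + 1)) - exp (-a * t ^ 2) * erf t / (2 * a))
      (t * exp (-a * t ^ 2) * erf t) t := by
  have hexp : HasDerivAt (fun t => exp (-a * t ^ 2)) (-2 * a * t * exp (-a * t ^ 2)) t := by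
    convert ((hasDerivAt_pow 2 t).const_mul (-a)).exp using 1; ring
  have hscaled := (hasDerivAt_erf (√(a + 1) * t)).comp t ((hasDerivAt_id t).const_mul √(a + 1))
  refine ((hscaled.div_const _).sub ((hexp.mul (hasDerivAt_erf t)).div_const _)).congr_deriv ?_
  have hsplit : exp (-(√(a + 1) * t) ^ 2) = exp (-a * t ^ 2) * exp (-t ^ 2) := by
    rw [← exp_add, mul_pow, sq_sqrt (by linarith)]; ring_nf
  rw [hsplit]
  field_simp
  ring

lemma integral_mul_exp_neg_mul_sq_mul_erf {a : ℝ} (ha : 0 < a) :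
    ∫ t : ℝ, t * exp (-a * t ^ 2) * erf t = 1 / (a * √(a + 1)) := by
  have hs : 0 < √(a + 1) := sqrt_pos.2 (by linarith)
  have hdecay (l : Filter ℝ) (hl : l ≤ cocompact ℝ) {c : ℝ} (hc : Tendsto erf l (𝓝 c)) :
      Tendsto (fun t => exp (-a * t ^ 2) * erf t / (2 * a)) l (𝓝 0) := by
    simpa using (((tendsto_exp_neg_mul_sq_cocompact ha).mono_left hl).mul hc).div_const (2 * a)
  have hbot := ((tendsto_erf_atBot.comp (tendsto_id.const_mul_atBot hs)).div_const
    (2 * a * √(a + 1))).sub (hdecay atBot atBot_le_cocompact tendsto_erf_atBot)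
  have htop := ((tendsto_erf_atTop.comp (tendsto_id.const_mul_atTop hs)).div_const
    (2 * a * √(a + 1))).sub (hdecay atTop atTop_le_cocompact tendsto_erf_atTop)
  rw [integral_of_hasDerivAt_of_tendsto (hasDerivAt_erf_primitive ha)
    (integrable_mul_exp_neg_mul_sq_mul_erf ha) hbot htop]
  field_simp
  ring

lemma hasDerivAt_arctan_div_mul_sqrt {p : ℝ} (hp : 0 < p) (v : ℝ) :
    HasDerivAt (fun v => arctan (v / (p * √(1 + p ^ 2 + v ^ 2))))
      (p / ((p ^ 2 + v ^ 2) * √(p ^ 2 + v ^ 2 + 1))) v := by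
  have hpos : 0 < 1 + p ^ 2 + v ^ 2 := by positivity
  set s := √(1 + p ^ 2 + v ^ 2) with hs
  have hs0 : 0 < s := sqrt_pos.2 hpos
  have hs2 : s ^ 2 = 1 + p ^ 2 + v ^ 2 := sq_sqrt hpos.le
  have hroot : HasDerivAt (fun v => √(1 + p ^ 2 + v ^ 2)) (v / s) v := by
    refine (((hasDerivAt_pow 2 v).const_add (1 + p ^ 2)).sqrt hpos.ne').congr_deriv ?_
    norm_num [← hs]
    field_simp
  have hratio := (hasDerivAt_id v).div (hroot.const_mul p) (by positivity)
  refine ((hasDerivAt_arctan _).comp v hratio).congr_deriv ?_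
  rw [show p ^ 2 + v ^ 2 + 1 = 1 + p ^ 2 + v ^ 2 by ring]
  simp only [Pi.div_apply, id_eq, ← hs]
  field_simp
  linear_combination v ^ 2 * hs2

lemma erf_mul_eq_intervalIntegral (q t : ℝ) :
    erf (q * t) = ∫ v in (0:ℝ)..q, 2 / √π * t * exp (-(v * t) ^ 2) := by
  have h := intervalIntegral.mul_integral_comp_mul_right (a := 0) (b := q)
    (f := fun s => exp (-s ^ 2)) (c := t)
  rw [zero_mul] at h
  rw [intervalIntegral.integral_const_mul, erf, ← h, mul_assoc]

lemma exp_neg_mul_sq_mul_erf_mul_erf (b q t : ℝ) :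
    exp (-b * t ^ 2) * erf t * erf (q * t) =
      ∫ v in (0:ℝ)..q, 2 / √π * (t * exp (-(b + v ^ 2) * t ^ 2) * erf t) := by
  rw [erf_mul_eq_intervalIntegral, ← intervalIntegral.integral_const_mul]
  refine intervalIntegral.integral_congr fun v _ => ?_
  have hsplit : exp (-(b + v ^ 2) * t ^ 2) = exp (-b * t ^ 2) * exp (-(v * t) ^ 2) := by
    rw [← exp_add]; ring_nf
  simp only [hsplit]
  ring

lemma integrable_prod_mul_exp_neg_mul_sq_mul_erf {b : ℝ} (hb : 0 < b) (μ : Measure ℝ)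
    [IsFiniteMeasure μ] :
    Integrable (Function.uncurry fun v t : ℝ => t * exp (-(b + v ^ 2) * t ^ 2) * erf t)
      (μ.prod volume) := by
  refine ((integrable_const (1 : ℝ)).mul_prod
    ((integrable_sq_mul_exp_neg_mul_sq hb).const_mul (2 / √π))).mono'
    (by fun_prop : Continuous _).aestronglyMeasurable (.of_forall fun z => ?_)
  rw [one_mul]
  exact norm_mul_exp_neg_mul_sq_mul_erf_le (by nlinarith [sq_nonneg z.1]) z.2

theorem integral_exp_erf_erf (p q : ℝ) (hp : 0 < p) :
    ∫ t : ℝ, Real.exp (-p^2 * t^2) * erf t * erf (q * t) =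
      2 / (Real.sqrt π * p) * Real.arctan (q / (p * Real.sqrt (1 + p^2 + q^2))) := by
  have : IsFiniteMeasure (volume.restrict (uIoc 0 q)) := isFiniteMeasure_restrict_Ioc _ _
  calc ∫ t : ℝ, exp (-p ^ 2 * t ^ 2) * erf t * erf (q * t)
      = ∫ t : ℝ, ∫ v in (0:ℝ)..q,
          2 / √π * (t * exp (-(p ^ 2 + v ^ 2) * t ^ 2) * erf t) := by
        simp only [exp_neg_mul_sq_mul_erf_mul_erf]
    _ = ∫ v in (0:ℝ)..q, ∫ t : ℝ,
          2 / √π * (t * exp (-(p ^ 2 + v ^ 2) * t ^ 2) * erf t) :=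
        (intervalIntegral_integral_swap
          ((integrable_prod_mul_exp_neg_mul_sq_mul_erf (pow_pos hp 2) _).const_mul _)).symm
    _ = ∫ v in (0:ℝ)..q,
          2 / (√π * p) * (p / ((p ^ 2 + v ^ 2) * √(p ^ 2 + v ^ 2 + 1))) := by
        refine intervalIntegral.integral_congr fun v _ => ?_
        rw [integral_const_mul, integral_mul_exp_neg_mul_sq_mul_erf
          (by positivity : 0 < p ^ 2 + v ^ 2)]
        field_simp
    _ = 2 / (√π * p) * arctan (q / (p * √(1 + p ^ 2 + q ^ 2))) := by
        rw [intervalIntegral.integral_const_mul, intervalIntegral.integral_eq_sub_of_hasDerivAt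
          (fun v _ => hasDerivAt_arctan_div_mul_sqrt hp v)]
        · simp
        · exact (continuous_const.div (by fun_prop) fun v => by positivity).intervalIntegrable ..
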